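/- If v* > 0 satisfies the quintic optimality equation a₅v*⁵ + a₄v*⁴ − a₂v*² − a₁v* − a₀ = 0, with a₅ = (1+C_E)κ_iβρ²S²C_{D,0}/η, a₄ = J̄*_W(1−β)S_{fc}ρ²S²C_{D,0}/2, a₂ = C_IρS, a₁ = 4(1+C_E)κ_iβC_{D,2}W²/η, a₀ = 6J̄*_W(1−β)S_{fc}C_{D,2}W², all parameters positive and β ∈ (0,1), then v* > (4C_{D,2}W²/(C_{D,0}ρ²S²))^{1/4} whenever C_I > 0; i.e., the minimum-DOC airspeed strictly exceeds the minimum-drag airspeed. -/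

import Mathlib

/-!
Write `k = C_{D,0}ρ²S²` and `m = 4C_{D,2}W²`, so that `v_md⁴ = m / k`. Then `a₅ = c₁k`, `a₁ = c₁m`,
`a₄ = c₂k/2` and `a₀ = 3c₂m/2` with `c₁, c₂ ≥ 0`. If `k v⁴ ≤ m`, the two positive terms of the quintic
are dominated by the two negative ones, `c₁k v⁵ ≤ c₁m v` and `c₂k v⁴/2 ≤ 3c₂m/2`, and the term
`-a₂v² < 0` makes the quintic strictly negative; so a positive root must satisfy `k v⁴ > m`.
-/

lemma rpow_one_div_four_lt_iff {x v : ℝ} (hx : 0 ≤ x) (hv : 0 ≤ v) :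
    x ^ ((1 : ℝ) / 4) < v ↔ x < v ^ 4 := by
  rw [one_div, Real.rpow_inv_lt_iff_of_pos hx hv four_pos]
  norm_num

lemma lt_mul_pow_four_of_quintic_root {c₁ c₂ k m a₂ v : ℝ} (hc₁ : 0 ≤ c₁) (hc₂ : 0 ≤ c₂)
    (hm : 0 ≤ m) (ha₂ : 0 < a₂) (hv : 0 < v)
    (hroot : c₁ * k * v ^ 5 + c₂ * k / 2 * v ^ 4 - a₂ * v ^ 2 - c₁ * m * v - 3 / 2 * c₂ * m = 0) :
    m < k * v ^ 4 := by
  by_contra! h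
  have h₅ : c₁ * k * v ^ 5 ≤ c₁ * m * v := by
    nlinarith [mul_nonneg (mul_nonneg hc₁ hv.le) (sub_nonneg.2 h)]
  have h₄ : c₂ * k / 2 * v ^ 4 ≤ 3 / 2 * c₂ * m := by
    nlinarith [mul_nonneg hc₂ (sub_nonneg.2 h), mul_nonneg hc₂ hm]
  have h₂ : 0 < a₂ * v ^ 2 := by positivity
  linarith

theorem optimal_exceeds_min_drag_airspeed_general
    (κi ρ S CD0 CD2 W η CI CE Sfc Jbar β vstar : ℝ)
    (hκi : 0 < κi) (hρ : 0 < ρ) (hS : 0 < S) (hCD0 : 0 < CD0) (hCD2 : 0 < CD2)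
    (hη : 0 < η) (hSfc : 0 < Sfc) (hCE : -1 < CE ∧ CE ≤ 1)
    (hβ : 0 < β ∧ β < 1) (hJbar : 0 ≤ Jbar) (hCI : 0 < CI)
    (a5 a4 a2 a1 a0 : ℝ)
    (ha5 : a5 = (1 + CE) * κi * β * ρ^2 * S^2 * CD0 / η)
    (ha4 : a4 = Jbar * (1 - β) * Sfc * ρ^2 * S^2 * CD0 / 2)
    (ha2 : a2 = CI * ρ * S)
    (ha1 : a1 = 4 * (1 + CE) * κi * β * CD2 * W^2 / η)
    (ha0 : a0 = 6 * Jbar * (1 - β) * Sfc * CD2 * W^2)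
    (hvpos : 0 < vstar)
    (hroot : a5 * vstar^5 + a4 * vstar^4 - a2 * vstar^2 - a1 * vstar - a0 = 0) :
    (4 * CD2 * W^2 / (CD0 * ρ^2 * S^2)) ^ ((1:ℝ)/4) < vstar := by
  rw [rpow_one_div_four_lt_iff (by positivity) hvpos.le, div_lt_iff₀ (by positivity),
    mul_comm (vstar ^ 4)]
  obtain ⟨hβ₀, hβ₁⟩ := hβ
  have hCE' : 0 < 1 + CE := by linarith [hCE.1]
  have hβ' : 0 ≤ 1 - β := by linarith
  refine lt_mul_pow_four_of_quintic_root (c₁ := (1 + CE) * κi * β / η)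
    (c₂ := Jbar * (1 - β) * Sfc) (a₂ := CI * ρ * S) (by positivity)
    (by positivity) (by positivity) (by positivity) hvpos ?_
  subst ha5 ha4 ha2 ha1 ha0
  linear_combination hroot

/-- The minimum-DOC airspeed (positive root of the quintic (12)) strictly exceeds
the minimum-drag airspeed v_md = (4C_{D,2}W²/(C_{D,0}ρ²S²))^{1/4} when C_I > 0. -/
theorem optimal_exceeds_min_drag_airspeed
    (κi ρ S CD0 CD2 W η CI CE Sfc Jbar β vstar : ℝ)
    (hκi : 0 < κi) (hρ : 0 < ρ) (hS : 0 < S) (hCD0 : 0 < CD0) (hCD2 : 0 < CD2)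
    (hW : 0 < W) (hη : 0 < η) (hSfc : 0 < Sfc) (hCE : -1 < CE ∧ CE ≤ 1)
    (hβ : 0 < β ∧ β < 1) (hJbar : 0 ≤ Jbar) (hCI : 0 < CI)
    (a5 a4 a2 a1 a0 : ℝ)
    (ha5 : a5 = (1 + CE) * κi * β * ρ^2 * S^2 * CD0 / η)
    (ha4 : a4 = Jbar * (1 - β) * Sfc * ρ^2 * S^2 * CD0 / 2)
    (ha2 : a2 = CI * ρ * S)
    (ha1 : a1 = 4 * (1 + CE) * κi * β * CD2 * W^2 / η)
    (ha0 : a0 = 6 * Jbar * (1 - β) * Sfc * CD2 * W^2)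
    (hvpos : 0 < vstar)
    (hroot : a5 * vstar^5 + a4 * vstar^4 - a2 * vstar^2 - a1 * vstar - a0 = 0) :
    (4 * CD2 * W^2 / (CD0 * ρ^2 * S^2)) ^ ((1:ℝ)/4) < vstar :=
  optimal_exceeds_min_drag_airspeed_general κi ρ S CD0 CD2 W η CI CE Sfc Jbar β vstar hκi hρ hS hCD0
    hCD2 hη hSfc hCE hβ hJbar hCI a5 a4 a2 a1 a0 ha5 ha4 ha2 ha1 ha0 hvpos hroot
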